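/- Let G be a finite simple graph on a vertex set W with |W| = N, let m ≥ 2 and t be integers with 2t ≥ N, and consider the m-blowup G' of G. Then the minimum, over all pairs of sets V1, V2 ⊆ W × {1,…,m} with V1 ∪ V2 = W × {1,…,m} and |V1| = |V2| = t·m, of the number of edges of G' having one endpoint in V1 ∖ V2 and the other in V2 ∖ V1, is either equal to 0 or at least m²/4. -/

import Mathlib

open Finset

/-- The cost of a (possibly replicated) bipartition `(V1, V2)` of the vertex set of a simple
graph `G`: the number of edges of `G` having one endpoint in `V1 \ V2` and the other in
`V2 \ V1`. -/
def repCost {V : Type*} [Fintype V] [DecidableEq V] (G : SimpleGraph V) [DecidableRel G.Adj]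
    (V1 V2 : Finset V) : ℕ :=
  (G.edgeFinset.filter (fun e => ∃ a ∈ V1 \ V2, ∃ b ∈ V2 \ V1, e = s(a, b))).card

/-- The `m`-blowup of a simple graph `G` on `W`: the graph on `W × Fin m` where `(u, i)` and
`(v, j)` are adjacent iff either `u = v` and `i ≠ j`, or `u` and `v` are adjacent in `G`. -/
def blowup {W : Type*} (G : SimpleGraph W) (m : ℕ) : SimpleGraph (W × Fin m) where
  Adj x y := (x.1 = y.1 ∧ x.2 ≠ y.2) ∨ G.Adj x.1 y.1
  symm := by
    constructor
    intro x y h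
    rcases h with ⟨h1, h2⟩ | h
    · exact Or.inl ⟨h1.symm, h2.symm⟩
    · exact Or.inr h.symm
  loopless := by
    constructor
    intro x h
    rcases h with ⟨_, h2⟩ | h
    · exact h2 rfl
    · exact G.irrefl h

instance {W : Type*} [DecidableEq W] (G : SimpleGraph W) [DecidableRel G.Adj] (m : ℕ) :
    DecidableRel (blowup G m).Adj :=
  fun x y => inferInstanceAs (Decidable ((x.1 = y.1 ∧ x.2 ≠ y.2) ∨ G.Adj x.1 y.1))

/-!
Write `A = V1 \ V2` and `B = V2 \ V1`: they are disjoint and both have `k * m` elements, where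
`k = |W| - t`. If `G` has two disjoint `k`-sets `S`, `T` with no edge between them, then
`A = S × Fin m`, `B = T × Fin m` is a pair of cost `0`. Otherwise, for every `k`-set `S` fewer
than `k` vertices lie outside the closed neighbourhood of `S`, so at least `m` elements of `B`
lie in cliques of that neighbourhood. The cost is at least `∑_{p ∈ A} g p.1`, where `g u` counts
the elements of `B` in the cliques of the closed neighbourhood of `u`. Since `A` meets each
clique in at most `m` points, the bathtub principle bounds this sum below by `m` times the sum of
`g` over a `k`-set where `g` is smallest, hence by `m * m`.
-/

theorem Finset.exists_card_eq_forall_mem_forall_notMem_le {ι α : Type*} [Fintype ι]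
    [DecidableEq ι] [LinearOrder α] (f : ι → α) {k : ℕ} (hk : k ≤ Fintype.card ι) :
    ∃ s : Finset ι, #s = k ∧ ∀ i ∈ s, ∀ j ∉ s, f i ≤ f j := by
  induction k with
  | zero => exact ⟨∅, card_empty, by simp⟩
  | succ k ih =>
    obtain ⟨s, hs, hsf⟩ := ih (by omega)
    obtain ⟨x, hx, hxmin⟩ := exists_min_image sᶜ f
      (card_pos.1 (by rw [card_compl, hs]; omega))
    rw [mem_compl] at hx
    refine ⟨insert x s, by rw [card_insert_of_notMem hx, hs], ?_⟩
    intro i hi j hj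
    rw [mem_insert, not_or] at hj
    rcases mem_insert.1 hi with rfl | hi
    · exact hxmin j (mem_compl.2 hj.2)
    · exact hsf i hi j hj.2

theorem Finset.mul_sum_le_sum_mul_of_le_threshold {ι R : Type*} [Fintype ι] [DecidableEq ι]
    [CommRing R] [LinearOrder R] [IsStrictOrderedRing R] (s : Finset ι) {a g : ι → R} {m c : R}
    (ha : ∀ i, 0 ≤ a i) (ham : ∀ i, a i ≤ m) (hsum : ∑ i, a i = #s * m)
    (hs : ∀ i ∈ s, g i ≤ c) (hsc : ∀ i ∉ s, c ≤ g i) :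
    m * ∑ i ∈ s, g i ≤ ∑ i, a i * g i := by
  have hin : ∑ i ∈ s, (m - a i) * g i ≤ ∑ i ∈ s, (m - a i) * c :=
    sum_le_sum fun i hi => mul_le_mul_of_nonneg_left (hs i hi) (sub_nonneg.2 (ham i))
  have hout : ∑ i ∈ sᶜ, a i * c ≤ ∑ i ∈ sᶜ, a i * g i :=
    sum_le_sum fun i hi => mul_le_mul_of_nonneg_left (hsc i (mem_compl.1 hi)) (ha i)
  have hmass : ∑ i ∈ s, (m - a i) = ∑ i ∈ sᶜ, a i := by
    rw [sum_sub_distrib, sum_const, nsmul_eq_mul, ← hsum, ← sum_add_sum_compl s a]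
    ring
  rw [← sum_mul, hmass, sum_mul] at hin
  rw [← sum_add_sum_compl s, mul_sum]
  have hsplit : ∑ i ∈ s, m * g i = ∑ i ∈ s, a i * g i + ∑ i ∈ s, (m - a i) * g i := by
    rw [← sum_add_distrib]; exact sum_congr rfl fun i _ => by ring
  linarith

theorem Finset.card_sdiff_of_union_eq_univ {α : Type*} [Fintype α] [DecidableEq α]
    {s t : Finset α} (h : s ∪ t = univ) : #(s \ t) = Fintype.card α - #t := by
  rw [← union_sdiff_right, h, ← compl_eq_univ_sdiff, card_compl]

theorem card_interedges_le_repCost {V : Type*} [Fintype V] [DecidableEq V] (H : SimpleGraph V)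
    [DecidableRel H.Adj] (V1 V2 : Finset V) :
    #(H.interedges (V1 \ V2) (V2 \ V1)) ≤ repCost H V1 V2 := by
  refine card_le_card_of_injOn (fun z => s(z.1, z.2)) (fun z hz => ?_) fun z hz z' hz' hzz' => ?_
  · rw [mem_coe, SimpleGraph.mem_interedges_iff] at hz
    simp only [coe_filter, Set.mem_ofPred_eq, SimpleGraph.mem_edgeFinset, SimpleGraph.mem_edgeSet]
    exact ⟨hz.2.2, z.1, hz.1, z.2, hz.2.1, rfl⟩
  · rw [mem_coe, SimpleGraph.mem_interedges_iff] at hz hz'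
    rcases Sym2.eq_iff.1 hzz' with ⟨h1, h2⟩ | ⟨h1, -⟩
    · exact Prod.ext h1 h2
    · exact absurd (h1 ▸ hz'.2.1) (disjoint_left.1 disjoint_sdiff_sdiff hz.1)

theorem repCost_eq_zero_of_forall_not_adj {V : Type*} [Fintype V] [DecidableEq V]
    (H : SimpleGraph V) [DecidableRel H.Adj] {V1 V2 : Finset V}
    (h : ∀ a ∈ V1 \ V2, ∀ b ∈ V2 \ V1, ¬ H.Adj a b) : repCost H V1 V2 = 0 := by
  rw [repCost, card_eq_zero, filter_eq_empty_iff]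
  rintro e he ⟨a, ha, b, hb, rfl⟩
  exact h a ha b hb (H.mem_edgeFinset.1 he)

theorem Finset.card_filter_fst_eq_le {α β : Type*} [DecidableEq α] [Fintype β]
    (A : Finset (α × β)) (a : α) : #{p ∈ A | p.1 = a} ≤ Fintype.card β := by
  refine card_le_card_of_injOn Prod.snd (fun _ _ => mem_coe.2 (mem_univ _)) fun p hp q hq h => ?_
  rw [coe_filter] at hp hq
  exact Prod.ext (hp.2.trans hq.2.symm) h

section

variable {W : Type*}

def HasSeparatedPair (G : SimpleGraph W) (k : ℕ) : Prop :=
  ∃ S T : Finset W, #S = k ∧ #T = k ∧ Disjoint S T ∧ ∀ u ∈ S, ∀ v ∈ T, ¬ G.Adj u v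

variable [Fintype W] [DecidableEq W] (G : SimpleGraph W) [DecidableRel G.Adj] {m : ℕ}

/-- Every vertex of the clique of `u` outside `B` has exactly this many blowup-neighbours in `B`. -/
def closedNbhdMass (B : Finset (W × Fin m)) (u : W) : ℕ :=
  #{q ∈ B | u = q.1 ∨ G.Adj u q.1}

theorem card_interedges_blowup {A B : Finset (W × Fin m)} (hAB : Disjoint A B) :
    #((blowup G m).interedges A B) = ∑ u, #{p ∈ A | p.1 = u} * closedNbhdMass G B u := by
  have hfiber : ∀ p ∈ A, #{q ∈ B | (blowup G m).Adj p q} = closedNbhdMass G B p.1 := by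
    intro p hp
    refine congrArg card (filter_congr fun q hq => ?_)
    have hpq : p ≠ q := fun h => disjoint_left.1 hAB hp (h ▸ hq)
    exact or_congr_left ⟨And.left, fun h => ⟨h, fun h' => hpq (Prod.ext h h')⟩⟩
  calc #((blowup G m).interedges A B) = ∑ p ∈ A, #{q ∈ B | (blowup G m).Adj p q} := by
        simp only [SimpleGraph.interedges_def, card_filter, sum_product]
    _ = ∑ p ∈ A, closedNbhdMass G B p.1 := sum_congr rfl hfiber
    _ = ∑ u, #{p ∈ A | p.1 = u} * closedNbhdMass G B u := by
        rw [← sum_fiberwise' A Prod.fst]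
        simp only [sum_const, smul_eq_mul]

variable {G} {k : ℕ}

theorem card_outside_closedNbhd_lt (hsep : ¬ HasSeparatedPair G k) {S : Finset W}
    (hS : #S = k) :
    #{v | ∀ u ∈ S, u ≠ v ∧ ¬ G.Adj u v} < k := by
  by_contra! h
  obtain ⟨T, hT, hTk⟩ := exists_subset_card_eq h
  refine hsep ⟨S, T, hS, hTk, disjoint_left.2 fun u hu huT => ?_, fun u hu v hv => ?_⟩
  · exact ((mem_filter.1 (hT huT)).2 u hu).1 rfl
  · exact ((mem_filter.1 (hT hv)).2 u hu).2

theorem le_sum_closedNbhdMass (hsep : ¬ HasSeparatedPair G k) {S : Finset W} (hS : #S = k)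
    {B : Finset (W × Fin m)} (hB : #B = k * m) :
    m ≤ ∑ u ∈ S, closedNbhdMass G B u := by
  set out : Finset W := {v | ∀ u ∈ S, u ≠ v ∧ ¬ G.Adj u v}
  have hcover :
      B ⊆ {q ∈ B | q.1 ∈ out} ∪ S.biUnion fun u => {q ∈ B | u = q.1 ∨ G.Adj u q.1} := by
    intro q hq
    by_cases hout : q.1 ∈ out
    · exact mem_union_left _ (mem_filter.2 ⟨hq, hout⟩)
    · simp only [out, mem_filter, mem_univ, true_and, not_forall, not_and_or, not_not] at hout
      obtain ⟨u, hu, h⟩ := hout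
      exact mem_union_right _ (mem_biUnion.2 ⟨u, hu, mem_filter.2 ⟨hq, h⟩⟩)
  have hout : #{q ∈ B | q.1 ∈ out} ≤ #out * m := by
    calc #{q ∈ B | q.1 ∈ out} ≤ #(out ×ˢ (univ : Finset (Fin m))) :=
          card_le_card fun q hq => mem_product.2 ⟨(mem_filter.1 hq).2, mem_univ _⟩
      _ = #out * m := by simp
  have hout_lt : (#out + 1) * m ≤ k * m :=
    Nat.mul_le_mul_right m (card_outside_closedNbhd_lt hsep hS)
  have hB_le : #B ≤ #out * m + ∑ u ∈ S, closedNbhdMass G B u :=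
    (card_le_card hcover).trans ((card_union_le _ _).trans (Nat.add_le_add hout card_biUnion_le))
  linarith

theorem mul_self_le_repCost_blowup (hsep : ¬ HasSeparatedPair G k) (hk : k ≤ Fintype.card W)
    {V1 V2 : Finset (W × Fin m)} (hA : #(V1 \ V2) = k * m) (hB : #(V2 \ V1) = k * m) :
    m * m ≤ repCost (blowup G m) V1 V2 := by
  set g := closedNbhdMass G (V2 \ V1)
  obtain ⟨S, hS, hSg⟩ := exists_card_eq_forall_mem_forall_notMem_le g hk
  have hbathtub : m * ∑ u ∈ S, g u ≤ ∑ u, #{p ∈ V1 \ V2 | p.1 = u} * g u := by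
    have hsum : ∑ u, #{p ∈ V1 \ V2 | p.1 = u} = #S * m := by
      rw [hS, ← hA, card_eq_sum_card_fiberwise fun p _ => mem_univ p.1]
    have := mul_sum_le_sum_mul_of_le_threshold (R := ℤ) S (g := fun u => g u) (m := m)
      (c := (S.sup g : ℕ)) (fun u => Nat.cast_nonneg _)
      (fun u => by simpa using card_filter_fst_eq_le (V1 \ V2) u) (by exact_mod_cast hsum)
      (fun u hu => by exact_mod_cast le_sup hu)
      (fun v hv => by exact_mod_cast Finset.sup_le fun u hu => hSg u hu v hv)
    exact_mod_cast this
  calc m * m ≤ m * ∑ u ∈ S, g u := Nat.mul_le_mul_left m (le_sum_closedNbhdMass hsep hS hB)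
    _ ≤ ∑ u, #{p ∈ V1 \ V2 | p.1 = u} * g u := hbathtub
    _ = #((blowup G m).interedges (V1 \ V2) (V2 \ V1)) :=
        (card_interedges_blowup G disjoint_sdiff_sdiff).symm
    _ ≤ repCost (blowup G m) V1 V2 := card_interedges_le_repCost _ _ _

theorem exists_repCost_blowup_eq_zero (hsep : HasSeparatedPair G k) :
    ∃ V1 V2 : Finset (W × Fin m), V1 ∪ V2 = univ ∧ #V1 = (Fintype.card W - k) * m ∧
      #V2 = (Fintype.card W - k) * m ∧ repCost (blowup G m) V1 V2 = 0 := by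
  obtain ⟨S, T, hS, hT, hST, hnadj⟩ := hsep
  have hcard : ∀ U : Finset W, #U = k →
      #(U ×ˢ (univ : Finset (Fin m)))ᶜ = (Fintype.card W - k) * m := fun U hU => by
    simp [card_compl, hU, Nat.sub_mul]
  refine ⟨(T ×ˢ univ)ᶜ, (S ×ˢ univ)ᶜ, ?_, hcard T hT, hcard S hS, ?_⟩
  · rw [← compl_inter, product_inter_product, disjoint_iff_inter_eq_empty.1 hST.symm]
    simp
  · refine repCost_eq_zero_of_forall_not_adj _ fun a ha b hb hab => ?_
    simp only [mem_sdiff, mem_compl, mem_product, mem_univ, and_true, not_not] at ha hb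
    rcases hab with ⟨h, -⟩ | h
    · exact disjoint_left.1 hST ha.2 (h ▸ hb.2)
    · exact hnadj _ ha.2 _ hb.2 h

end

theorem stmt6_general {W : Type*} [Fintype W] [DecidableEq W]
    (G : SimpleGraph W) [DecidableRel G.Adj]
    (m t : ℕ) (hm : 2 ≤ m) :
    (∃ V1 V2 : Finset (W × Fin m), V1 ∪ V2 = Finset.univ ∧
      V1.card = t * m ∧ V2.card = t * m ∧ repCost (blowup G m) V1 V2 = 0) ∨
    (∀ V1 V2 : Finset (W × Fin m), V1 ∪ V2 = Finset.univ →
      V1.card = t * m → V2.card = t * m →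
      (m : ℝ) ^ 2 / 4 ≤ (repCost (blowup G m) V1 V2 : ℝ)) := by
  by_cases htW : Fintype.card W < t
  · refine Or.inr fun V1 V2 _ hV1 _ => absurd (card_le_univ V1) ?_
    rw [hV1, Fintype.card_prod, Fintype.card_fin, not_le]
    exact Nat.mul_lt_mul_of_pos_right htW (by omega)
  by_cases hsep : HasSeparatedPair G (Fintype.card W - t)
  · left
    simpa [Nat.sub_sub_self (not_lt.1 htW)] using exists_repCost_blowup_eq_zero (m := m) hsep
  · right
    intro V1 V2 hU hV1 hV2
    have hcard : ∀ {V V' : Finset (W × Fin m)}, V ∪ V' = univ → #V' = t * m →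
        #(V \ V') = (Fintype.card W - t) * m := fun h h' => by
      rw [card_sdiff_of_union_eq_univ h, h', Fintype.card_prod, Fintype.card_fin, Nat.sub_mul]
    have := mul_self_le_repCost_blowup hsep (Nat.sub_le _ _) (hcard hU hV2)
      (hcard ((union_comm _ _).trans hU) hV1)
    calc (m : ℝ) ^ 2 / 4 ≤ m * m := by nlinarith
      _ ≤ repCost (blowup G m) V1 V2 := by exact_mod_cast this

/-- Let `G` be a finite simple graph on a vertex set `W` with `|W| = N`, let
`m ≥ 2` and `t` be integers with `2t ≥ N`, and consider the `m`-blowup `G'` of `G`. Then the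
minimum, over all pairs of sets `V1, V2 ⊆ W × {1,…,m}` with `V1 ∪ V2 = W × {1,…,m}` and
`|V1| = |V2| = t·m`, of the number of edges of `G'` having one endpoint in `V1 ∖ V2` and the
other in `V2 ∖ V1`, is either equal to `0` or at least `m²/4`. -/
theorem stmt6 {W : Type*} [Fintype W] [DecidableEq W]
    (G : SimpleGraph W) [DecidableRel G.Adj]
    (N m t : ℕ) (hN : Fintype.card W = N) (hm : 2 ≤ m) (ht : N ≤ 2 * t) :
    (∃ V1 V2 : Finset (W × Fin m), V1 ∪ V2 = Finset.univ ∧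
      V1.card = t * m ∧ V2.card = t * m ∧ repCost (blowup G m) V1 V2 = 0) ∨
    (∀ V1 V2 : Finset (W × Fin m), V1 ∪ V2 = Finset.univ →
      V1.card = t * m → V2.card = t * m →
      (m : ℝ) ^ 2 / 4 ≤ (repCost (blowup G m) V1 V2 : ℝ)) :=
  stmt6_general G m t hm
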